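/- arXiv:2102.08181 — 3 statements merged into one kernel-verified Lean document; each statement's English description precedes it below -/
import Mathlib

section
/- For all real numbers $\alpha, \beta, x_3$ with $0 < \alpha \leq 1$, $0 < \beta \leq 1$, and $0 < x_3 \leq 1$, the quantity $X = 1 - \alpha\beta(2 - \beta + (1-\alpha)\beta^2) - \alpha(1-\beta)(2 - \alpha - \alpha\beta)\beta^4 x_3^4$ satisfies $X \geq (1-\alpha)^2 \geq 0$. -/
/-! The variable `x3` only enters through `- c * x3 ^ 4` with `c = α(1-β)(2-α-αβ)β⁴ ≥ 0`, so the
worst case is `x3 = 1`. There the excess over `(1-α)²` factors as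
`α(1-α)(1-β)(1+β+β²-β⁴-β⁵) + α(1-β)²(1-β⁴)`, a sum of nonnegative terms on the unit box. -/

section UnitBox

variable {α β : ℝ}

lemma one_add_add_sq_sub_pow_four_sub_pow_five_nonneg (hβ : 0 ≤ β) (hβ1 : β ≤ 1) :
    0 ≤ 1 + β + β ^ 2 - β ^ 4 - β ^ 5 := by
  nlinarith [pow_le_one₀ hβ hβ1 (n := 4), pow_le_one₀ hβ hβ1 (n := 5), sq_nonneg β]

lemma quartic_coeff_nonneg (hα : 0 ≤ α) (hα1 : α ≤ 1) (hβ1 : β ≤ 1) :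
    0 ≤ α * (1 - β) * (2 - α - α * β) * β ^ 4 := by
  have : 0 ≤ 2 - α - α * β := by nlinarith
  have : 0 ≤ 1 - β := by linarith
  positivity

lemma one_sub_sq_le_at_one (hα : 0 ≤ α) (hα1 : α ≤ 1) (hβ : 0 ≤ β) (hβ1 : β ≤ 1) :
    (1 - α) ^ 2 ≤
      1 - α * β * (2 - β + (1 - α) * β ^ 2) - α * (1 - β) * (2 - α - α * β) * β ^ 4 := by
  have excess :
      1 - α * β * (2 - β + (1 - α) * β ^ 2) - α * (1 - β) * (2 - α - α * β) * β ^ 4 - (1 - α) ^ 2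
        = α * (1 - α) * ((1 - β) * (1 + β + β ^ 2 - β ^ 4 - β ^ 5))
          + α * ((1 - β) ^ 2 * (1 - β ^ 4)) := by
    ring
  have h₁ : 0 ≤ 1 - α := by linarith
  have h₂ : 0 ≤ 1 - β := by linarith
  have h₃ : 0 ≤ 1 - β ^ 4 := sub_nonneg.mpr (pow_le_one₀ hβ hβ1)
  have h₄ := one_add_add_sq_sub_pow_four_sub_pow_five_nonneg hβ hβ1
  have : 0 ≤ α * (1 - α) * ((1 - β) * (1 + β + β ^ 2 - β ^ 4 - β ^ 5))
      + α * ((1 - β) ^ 2 * (1 - β ^ 4)) :=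
    add_nonneg (mul_nonneg (mul_nonneg hα h₁) (mul_nonneg h₂ h₄))
      (mul_nonneg hα (mul_nonneg (sq_nonneg _) h₃))
  linarith

end UnitBox

theorem stmt_2 (α β x3 : ℝ) (hα : 0 < α) (hα1 : α ≤ 1) (hβ : 0 < β) (hβ1 : β ≤ 1)
    (hx : 0 < x3) (hx1 : x3 ≤ 1) :
    1 - α*β*(2 - β + (1-α)*β^2) - α*(1-β)*(2 - α - α*β)*β^4*x3^4 ≥ (1-α)^2 ∧
    (1-α)^2 ≥ 0 := by
  refine ⟨?_, sq_nonneg _⟩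
  have hc := quartic_coeff_nonneg hα.le hα1 hβ1
  have hx4 : x3 ^ 4 ≤ 1 := pow_le_one₀ hx.le hx1
  calc (1 - α) ^ 2
      ≤ 1 - α * β * (2 - β + (1 - α) * β ^ 2) - α * (1 - β) * (2 - α - α * β) * β ^ 4 :=
        one_sub_sq_le_at_one hα.le hα1 hβ.le hβ1
    _ ≤ 1 - α*β*(2 - β + (1-α)*β^2) - α*(1-β)*(2 - α - α*β)*β^4*x3^4 := by
        linarith [mul_le_of_le_one_right hc hx4]
end

section
/- Define $\Delta(u) = \frac{1}{2\sqrt{2}}\left(-3 - \frac{\sqrt{2}}{e} + \sqrt{2}e + \frac{1 - e^u}{u} + u + \frac{u}{2e^u}\right)$ for $u \in (0, 2]$. Then $\Delta(u) < 0$ for all $u \in (0, 2]$. -/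
/-! The constant `√2·e - √2/e` is below `3.4`, and the two `u`-dependent terms are bounded by
Taylor polynomials of `exp` (degree 4 for `(1 - eᵘ)/u`, degree 2 for `u/(2eᵘ)`); this leaves a
polynomial inequality once the denominator `2 + 2u + u²` is cleared. -/

open Real

lemma sqrt_two_mul_exp_one_sub_sqrt_two_div_exp_one_lt :
    √2 * exp 1 - √2 / exp 1 < 3.4 := by
  have hs_pos : 0 < √2 := by positivity
  have hs_lt : √2 < 1.4143 := by nlinarith [sq_sqrt (zero_le_two : (0 : ℝ) ≤ 2)]
  have hs_gt : 1.414 < √2 := by nlinarith [sq_sqrt (zero_le_two : (0 : ℝ) ≤ 2)]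
  have he_lt : exp 1 < 2.7182819 := by linarith [exp_one_lt_d9]
  have he_gt : 2.7182818 < exp 1 := by linarith [exp_one_gt_d9]
  have h_mul : √2 * exp 1 < 1.4143 * 2.7182819 :=
    mul_lt_mul'' hs_lt he_lt hs_pos.le (exp_pos 1).le
  have h_div : 1.414 / 2.7182819 < √2 / exp 1 :=
    div_lt_div₀ hs_gt he_lt.le (by norm_num) (exp_pos 1)
  norm_num at h_mul h_div ⊢
  linarith

lemma quartic_le_exp {u : ℝ} (hu : 0 ≤ u) :
    1 + u + u ^ 2 / 2 + u ^ 3 / 6 + u ^ 4 / 24 ≤ exp u := by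
  have := sum_le_exp_of_nonneg hu 5
  norm_num [Finset.sum_range_succ, Nat.factorial] at this
  linarith

lemma one_sub_exp_div_le {u : ℝ} (hu : 0 < u) :
    (1 - exp u) / u ≤ -(1 + u / 2 + u ^ 2 / 6 + u ^ 3 / 24) := by
  rw [div_le_iff₀ hu]
  nlinarith [quartic_le_exp hu.le]

lemma div_two_mul_exp_le {u : ℝ} (hu : 0 ≤ u) :
    u / (2 * exp u) ≤ u / (2 + 2 * u + u ^ 2) := by
  apply div_le_div_of_nonneg_left hu (by positivity)
  nlinarith [quadratic_le_exp_of_nonneg hu]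

lemma div_quadratic_lt_cubic {u : ℝ} (hu : 0 ≤ u) :
    u / (2 + 2 * u + u ^ 2) < 0.6 - u / 2 + u ^ 2 / 6 + u ^ 3 / 24 := by
  rw [div_lt_iff₀ (by positivity)]
  nlinarith [sq_nonneg (u - 1), sq_nonneg (u * (u - 1)), sq_nonneg (u ^ 2 - 1), mul_nonneg hu hu]

theorem stmt_5_general (u : ℝ) (hu : 0 < u) :
    (1/(2*Real.sqrt 2)) * (-3 - Real.sqrt 2 / Real.exp 1 + Real.sqrt 2 * Real.exp 1
      + (1 - Real.exp u)/u + u + u/(2*Real.exp u)) < 0 := by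
  refine mul_neg_of_pos_of_neg (by positivity) ?_
  linarith [sqrt_two_mul_exp_one_sub_sqrt_two_div_exp_one_lt, one_sub_exp_div_le hu,
    div_two_mul_exp_le hu.le, div_quadratic_lt_cubic hu.le]

theorem stmt_5 (u : ℝ) (hu : 0 < u) (hu2 : u ≤ 2) :
    (1/(2*Real.sqrt 2)) * (-3 - Real.sqrt 2 / Real.exp 1 + Real.sqrt 2 * Real.exp 1
      + (1 - Real.exp u)/u + u + u/(2*Real.exp u)) < 0 :=
  stmt_5_general u hu
end

section
/- Let $x_1, x_2, x_3, x_4$ be real numbers with $0 < x_1 < 1 < x_4$, $x_1 < x_2 < x_3 < x_4$, $x_1 x_2 \geq 1/\sqrt{2}$, and $y_3 y_4 \geq 1/\sqrt{2}$, where $y_3 = 1/x_3$ and $y_4 = 1/x_4$. Then the quantity $A = 3 - x_1/x_2 - \ln(y_3 x_2) - y_4/y_3$ satisfies $A \leq 3 - \left(\frac{x_2^{-2}}{\sqrt{2}} + \ln x_2\right) - \left(\frac{y_3^{-2}}{\sqrt{2}} + \ln y_3\right) \leq 3 - 2 \cdot \frac{2 + \ln 2}{4} < 2$. -/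
lemma gmin (z : ℝ) (hz : 0 < z) :
    (2 + Real.log 2)/4 ≤ z⁻¹^2/Real.sqrt 2 + Real.log z := by
  have hs : (0:ℝ) < Real.sqrt 2 := Real.sqrt_pos.mpr (by norm_num)
  have hs2 : Real.sqrt 2 * Real.sqrt 2 = 2 := Real.mul_self_sqrt (by norm_num)
  have hzi : (0:ℝ) < z⁻¹^2 := by positivity
  have h := Real.log_le_sub_one_of_pos (mul_pos hs hzi)
  have hlog : Real.log (Real.sqrt 2 * z⁻¹^2)
      = Real.log 2 / 2 - 2 * Real.log z := by
    rw [Real.log_mul (ne_of_gt hs) (ne_of_gt hzi), Real.log_sqrt (by norm_num),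
      Real.log_pow, Real.log_inv]
    ring
  rw [hlog] at h
  have key : Real.sqrt 2 * z⁻¹^2 = 2 * (z⁻¹^2 / Real.sqrt 2) := by
    field_simp
    nlinarith [hs2]
  rw [key] at h
  linarith

theorem stmt_8 (x1 x2 x3 x4 : ℝ) (h1 : 0 < x1) (h14 : x1 < 1) (h4 : 1 < x4)
    (h12 : x1 < x2) (h23 : x2 < x3) (h34 : x3 < x4)
    (hstep : x1 * x2 ≥ 1/Real.sqrt 2) (hstep' : (1/x3) * (1/x4) ≥ 1/Real.sqrt 2) :
    3 - x1/x2 - Real.log ((1/x3) * x2) - (1/x4)/(1/x3)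
      ≤ 3 - (x2⁻¹^2/Real.sqrt 2 + Real.log x2) - ((1/x3)⁻¹^2/Real.sqrt 2 + Real.log (1/x3)) ∧
    3 - (x2⁻¹^2/Real.sqrt 2 + Real.log x2) - ((1/x3)⁻¹^2/Real.sqrt 2 + Real.log (1/x3))
      ≤ 3 - 2 * ((2 + Real.log 2)/4) ∧
    3 - 2 * ((2 + Real.log 2)/4) < 2 := by
  have hs : (0:ℝ) < Real.sqrt 2 := Real.sqrt_pos.mpr (by norm_num)
  have hs2 : Real.sqrt 2 * Real.sqrt 2 = 2 := Real.mul_self_sqrt (by norm_num)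
  have hx2 : (0:ℝ) < x2 := h1.trans h12
  have hx3 : (0:ℝ) < x3 := hx2.trans h23
  have hx4 : (0:ℝ) < x4 := by linarith
  refine ⟨?_, ?_, ?_⟩
  · rw [Real.log_mul (by positivity) (ne_of_gt hx2), show (1/x3)⁻¹ = x3 by simp,
      show (1/x4)/(1/x3) = x3/x4 by field_simp]
    have hA : x2⁻¹^2/Real.sqrt 2 ≤ x1/x2 := by
      rw [div_le_div_iff₀ hs hx2, inv_pow, inv_mul_le_iff₀ (by positivity)]
      have : (1:ℝ) ≤ x1 * x2 * Real.sqrt 2 := by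
        rw [ge_iff_le, div_le_iff₀ hs] at hstep
        linarith
      nlinarith
    have hB : x3^2/Real.sqrt 2 ≤ x3/x4 := by
      rw [ge_iff_le, div_le_iff₀ hs] at hstep'
      have h34' : x3 * x4 ≤ Real.sqrt 2 := by
        have hx34 : (0:ℝ) < x3 * x4 := mul_pos hx3 hx4
        rw [one_div, one_div, ← mul_inv] at hstep'
        have hinv : (x3 * x4) * (x3 * x4)⁻¹ = 1 := mul_inv_cancel₀ (ne_of_gt hx34)
        nlinarith [mul_le_mul_of_nonneg_left hstep' (le_of_lt hx34)]
      rw [div_le_div_iff₀ hs hx4]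
      nlinarith
    linarith
  · have g1 := gmin x2 hx2
    have g2 := gmin (1/x3) (by positivity)
    linarith
  · have : (0:ℝ) < Real.log 2 := Real.log_pos (by norm_num)
    linarith
end
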